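/- Let q₀ > 0, γ ∈ ℝ, x, t ∈ ℝ, let q ∈ ℂ with |q| = q₀, and let z ∈ ℂ with z ≠ 0. Set σ₃ = [[1,0],[0,−1]], Q = [[0, conj(q)],[q, 0]], Ω(z) = I − (1/z)σ₃Q, k(z) = (z + q₀²/z)/2, λ(z) = (z − q₀²/z)/2, and θ(x,t,z) = k(z)x + k(z)(λ(z) − 8γλ(z)³ + 4γλ(z)q₀³)t. Then Ω(z)·e^{iθ(x,t,z)σ₃} = −(1/z)·Ω(−q₀²/z)·e^{iθ(x,t,−q₀²/z)σ₃}·σ₃Q. (This is the identity behind the second symmetry Ψ_±(z) = −(1/z)Ψ_±(−q₀²/z)σ₃Q_± of the Jost solutions.) -/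

import Mathlib

/-- The identity behind the second symmetry of the Jost solutions:
`Ω(z)e^{iθ(x,t,z)σ₃} = -(1/z)·Ω(-q₀²/z)·e^{iθ(x,t,-q₀²/z)σ₃}·σ₃Q`. -/
theorem stmt_18 (q₀ γ x t : ℝ) (hq₀ : 0 < q₀) (q z : ℂ) (hq : ‖q‖ = q₀)
    (hz : z ≠ 0) :
    let σ₃ : Matrix (Fin 2) (Fin 2) ℂ := !![1, 0; 0, -1]
    let Q : Matrix (Fin 2) (Fin 2) ℂ := !![0, (starRingEnd ℂ) q; q, 0]
    let Ω : ℂ → Matrix (Fin 2) (Fin 2) ℂ := fun w => 1 - w⁻¹ • (σ₃ * Q)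
    let E : ℂ → Matrix (Fin 2) (Fin 2) ℂ := fun w => !![Complex.exp w, 0; 0, Complex.exp (-w)]
    let k : ℂ → ℂ := fun w => (w + (q₀ : ℂ) ^ 2 / w) / 2
    let l : ℂ → ℂ := fun w => (w - (q₀ : ℂ) ^ 2 / w) / 2
    let θ : ℂ → ℂ := fun w =>
      k w * (x : ℂ) + k w * (l w - 8 * (γ : ℂ) * (l w) ^ 3 + 4 * (γ : ℂ) * l w * (q₀ : ℂ) ^ 3) * (t : ℂ)
    Ω z * E (Complex.I * θ z) =
      -((1 / z) • (Ω (-(q₀ : ℂ) ^ 2 / z) * E (Complex.I * θ (-(q₀ : ℂ) ^ 2 / z)) * (σ₃ * Q))) := by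
  intro σ₃ Q Ω E k l θ
  have hq0 : (q₀ : ℂ) ≠ 0 := by exact_mod_cast hq₀.ne'
  have hqq : q * (starRingEnd ℂ) q = (q₀ : ℂ) ^ 2 := by
    rw [Complex.mul_conj, Complex.normSq_eq_norm_sq, hq]
    norm_cast
  have hqne : q ≠ 0 := by
    intro h
    rw [h] at hq
    simp at hq
    exact hq₀.ne' hq.symm
  have hc : (starRingEnd ℂ) q = (q₀ : ℂ) ^ 2 / q := by
    rw [eq_div_iff hqne, mul_comm]
    exact hqq
  have h1 : (q₀ : ℂ) ^ 2 / (-(q₀ : ℂ) ^ 2 / z) = -z := by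
    field_simp
  have hk : k (-(q₀ : ℂ) ^ 2 / z) = -(k z) := by
    simp only [k, h1]
    ring
  have hl : l (-(q₀ : ℂ) ^ 2 / z) = l z := by
    simp only [l, h1]
    ring
  have hθ : Complex.I * θ (-(q₀ : ℂ) ^ 2 / z) = -(Complex.I * θ z) := by
    simp only [θ, hk, hl]
    ring
  rw [hθ]
  have hM : σ₃ * Q = !![0, (starRingEnd ℂ) q; -q, 0] := by
    ext i j
    fin_cases i <;> fin_cases j <;>
      simp [σ₃, Q, Matrix.mul_apply, Fin.sum_univ_succ]
  generalize Complex.I * θ z = e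
  have hE : E (-e) = !![Complex.exp (-e), 0; 0, Complex.exp e] := by
    simp only [E, neg_neg]
  rw [hE]
  simp only [Ω, E, hM, hc]
  ext i j
  fin_cases i <;> fin_cases j <;>
    simp only [Matrix.mul_apply, Matrix.sub_apply, Matrix.smul_apply, Matrix.one_apply,
      Matrix.neg_apply, Fin.sum_univ_succ, Fin.sum_univ_zero, Matrix.cons_val_zero,
      Matrix.cons_val_one, Matrix.head_cons, Matrix.head_fin_const, Fin.zero_eta, Fin.mk_one,
      smul_eq_mul, if_true, if_false, Fin.isValue, ne_eq, one_ne_zero, not_false_eq_true,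
      zero_ne_one, Matrix.one_apply_eq, Matrix.one_apply_ne, mul_neg, neg_neg, add_zero,
      zero_add, mul_zero, zero_mul, mul_one, one_mul, neg_zero, sub_zero, zero_sub,
        Matrix.of_apply, Fin.succ_zero_eq_one, Matrix.cons_val_succ] <;>
    field_simp <;>
    ring
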